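/- arXiv:2008.03841 — 5 statements merged into one kernel-verified Lean document; each statement's English description precedes it below -/
import Mathlib

section
/- Consider the ODE system along a flow line: ė = e·[(1 + c_s²)·(ṅ/n) − (λe + 1)/τ₀] + (1 − λ(ϱ+p))(ϱ+p)/τ₀, where ϱ + p ≥ 0, 1 − λ(ϱ+p) ≥ 0, τ₀ > 0, n > 0, and all coefficient functions are continuous in τ. If e(0) ≥ 0 then e(τ) ≥ 0 for all τ ≥ 0 in the interval of existence. -/
/-!
Variation of constants. Writing the equation as `ė = A e + B` with
`A = (1 + c_s²) ṅ/n − (λe + 1)/τ₀` (continuous once `e` is) and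
`B = (1 − λ(ϱ+p))(ϱ+p)/τ₀ ≥ 0`, the product `e · exp(−∫₀^τ A)` has derivative
`B · exp(−∫₀^τ A) ≥ 0`, so it is nondecreasing from its value `e(0) ≥ 0`.
-/

open Set Real

section LinearInhomogeneous

variable {f A B : ℝ → ℝ} {a b : ℝ}

theorem hasDerivAt_mul_exp_neg_integral (hA : ContinuousOn A (Icc a b)) {x : ℝ}
    (hx : x ∈ Ioo a b) (hfx : HasDerivAt f (f x * A x + B x) x) :
    HasDerivAt (fun y => f y * exp (-∫ t in a..y, A t)) (B x * exp (-∫ t in a..x, A t)) x := by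
  have hprim : HasDerivAt (fun y => ∫ t in a..y, A t) (A x) x :=
    intervalIntegral.integral_hasDerivAt_right
      ((hA.mono (Icc_subset_Icc_right hx.2.le)).intervalIntegrable_of_Icc hx.1.le)
      (hA.mono Ioo_subset_Icc_self |>.stronglyMeasurableAtFilter isOpen_Ioo x hx)
      (hA.continuousAt (Icc_mem_nhds hx.1 hx.2))
  exact (hfx.fun_mul hprim.fun_neg.exp).congr_deriv (by ring)

theorem monotoneOn_mul_exp_neg_integral (hA : ContinuousOn A (Icc a b))
    (hf : ContinuousOn f (Icc a b)) (hf' : ∀ x ∈ Ioo a b, HasDerivAt f (f x * A x + B x) x)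
    (hB : ∀ x ∈ Ioo a b, 0 ≤ B x) :
    MonotoneOn (fun x => f x * exp (-∫ t in a..x, A t)) (Icc a b) := by
  have hderiv x (hx : x ∈ Ioo a b) := hasDerivAt_mul_exp_neg_integral hA hx (hf' x hx)
  have hprim : ContinuousOn (fun x => ∫ t in a..x, A t) (Icc a b) := by
    rcases le_or_gt a b with hab | hab
    · simpa [uIcc_of_le hab] using
        intervalIntegral.continuousOn_primitive_interval (hA.integrableOn_Icc.mono_set
          (uIcc_of_le hab).subset)
    · simp [Icc_eq_empty_of_lt hab]
  refine monotoneOn_of_deriv_nonneg (convex_Icc a b) (hf.mul hprim.neg.rexp) ?_ ?_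
  all_goals rw [interior_Icc]
  · exact fun x hx => (hderiv x hx).differentiableAt.differentiableWithinAt
  · intro x hx
    rw [(hderiv x hx).deriv]
    exact mul_nonneg (hB x hx) (exp_pos _).le

theorem nonneg_of_hasDerivAt_eq_mul_add_nonneg (hab : a ≤ b) (hA : ContinuousOn A (Icc a b))
    (hf : ContinuousOn f (Icc a b)) (hf' : ∀ x ∈ Ioo a b, HasDerivAt f (f x * A x + B x) x)
    (hB : ∀ x ∈ Ioo a b, 0 ≤ B x) (ha : 0 ≤ f a) : 0 ≤ f b := by
  have hmono := monotoneOn_mul_exp_neg_integral hA hf hf' hB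
    (left_mem_Icc.2 hab) (right_mem_Icc.2 hab) hab
  simp only [intervalIntegral.integral_same, neg_zero, exp_zero, mul_one] at hmono
  exact nonneg_of_mul_nonneg_left (ha.trans hmono) (exp_pos _)

end LinearInhomogeneous

theorem stmt9_general (e cs2 ndot n lam tau0 rp : ℝ → ℝ)
    (hcs2 : Continuous cs2) (hndot : Continuous ndot) (hncont : Continuous n)
    (hlamc : Continuous lam) (htauc : Continuous tau0)
    (hn : ∀ τ, 0 ≤ τ → 0 < n τ)
    (htau : ∀ τ, 0 ≤ τ → 0 < tau0 τ)
    (hrp : ∀ τ, 0 ≤ τ → 0 ≤ rp τ)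
    (hlam : ∀ τ, 0 ≤ τ → 0 ≤ 1 - lam τ * rp τ)
    (hderiv : ∀ τ, 0 ≤ τ → HasDerivAt e
      (e τ * ((1 + cs2 τ) * (ndot τ / n τ) - (lam τ * e τ + 1) / tau0 τ)
        + (1 - lam τ * rp τ) * rp τ / tau0 τ) τ)
    (h0 : 0 ≤ e 0) :
    ∀ τ, 0 ≤ τ → 0 ≤ e τ := by
  intro τ hτ
  have he : ContinuousOn e (Icc 0 τ) := fun x hx =>
    (hderiv x hx.1).continuousAt.continuousWithinAt
  refine nonneg_of_hasDerivAt_eq_mul_add_nonneg hτ ?_ he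
    (fun x hx => hderiv x hx.1.le) ?_ h0
  · exact ((continuous_const.add hcs2).continuousOn.mul
      (hndot.continuousOn.div hncont.continuousOn fun x hx => (hn x hx.1).ne')).sub
      (((hlamc.continuousOn.mul he).add continuousOn_const).div htauc.continuousOn
        fun x hx => (htau x hx.1).ne')
  · intro x hx
    have hx0 : 0 ≤ x := hx.1.le
    exact div_nonneg (mul_nonneg (hlam x hx0) (hrp x hx0)) (htau x hx0).le

theorem stmt9 (e cs2 ndot n lam tau0 rp : ℝ → ℝ)
    (hcs2 : Continuous cs2) (hndot : Continuous ndot) (hncont : Continuous n)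
    (hlamc : Continuous lam) (htauc : Continuous tau0) (hrpc : Continuous rp)
    (hn : ∀ τ, 0 ≤ τ → 0 < n τ)
    (htau : ∀ τ, 0 ≤ τ → 0 < tau0 τ)
    (hrp : ∀ τ, 0 ≤ τ → 0 ≤ rp τ)
    (hlam : ∀ τ, 0 ≤ τ → 0 ≤ 1 - lam τ * rp τ)
    (hderiv : ∀ τ, 0 ≤ τ → HasDerivAt e
      (e τ * ((1 + cs2 τ) * (ndot τ / n τ) - (lam τ * e τ + 1) / tau0 τ)
        + (1 - lam τ * rp τ) * rp τ / tau0 τ) τ)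
    (h0 : 0 ≤ e 0) :
    ∀ τ, 0 ≤ τ → 0 ≤ e τ :=
  stmt9_general e cs2 ndot n lam tau0 rp hcs2 hndot hncont hlamc htauc hn htau hrp hlam hderiv h0
end

section
/- The 3×3 matrix (𝒜⁰)^{-1}𝒜¹ arising from the 1+1-dimensional Müller-Israel-Stewart system, where 𝒜⁰ = [[u⁰, (ϱ+q)u¹/u⁰, 0],[0, (ϱ+q)/u⁰, u¹/u⁰],[0, c²(ϱ+q)u¹/u⁰, u⁰]] and 𝒜¹ = [[u¹, ϱ+q, 0],[0, (ϱ+q)u¹/(u⁰)², 1],[0, c²(ϱ+q), u¹]], with (u⁰)² = 1 + (u¹)², ϱ+q > 0, u⁰ > 0, and 0 < c < 1, has eigenvalues λ¹ = u¹/u⁰, λ² = (u¹ + c·u⁰)/(c·u¹ + u⁰), λ³ = (−u¹ + c·u⁰)/(c·u¹ − u⁰). -/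
/-!
Since `𝒜⁰⁻¹ 𝒜¹ - μ = 𝒜⁰⁻¹ (𝒜¹ - μ 𝒜⁰)`, the eigenvalues of `𝒜⁰⁻¹ 𝒜¹` are the roots of
`det (𝒜¹ - μ 𝒜⁰)`. Expanding along the first column, this determinant factors as
`(ϱ + q) / (u⁰)² · (u¹ - μ u⁰) · ((u¹ + c u⁰) - μ (u⁰ + c u¹)) · ((u¹ - c u⁰) - μ (u⁰ - c u¹))`,
a product of three linear factors whose roots are `λ¹, λ², λ³`. The same expansion gives
`det 𝒜⁰ = (ϱ + q) (u⁰ - c u¹) (u⁰ + c u¹) / u⁰`, and `(u⁰)² - c² (u¹)² = 1 + (1 - c²) (u¹)² > 0`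
keeps it, and the denominators of `λ², λ³`, away from zero.
-/

open Matrix

theorem Matrix.det_inv_mul_sub_smul_one_eq_zero_iff {n K : Type*} [Fintype n] [DecidableEq n]
    [Field K] {A B : Matrix n n K} (hA : IsUnit A.det) (μ : K) :
    det (A⁻¹ * B - μ • (1 : Matrix n n K)) = 0 ↔ det (B - μ • A) = 0 := by
  rw [← nonsing_inv_mul A hA, ← Matrix.mul_smul, ← Matrix.mul_sub, det_mul,
    mul_eq_zero, or_iff_right (isUnit_nonsing_inv_det A hA).ne_zero]

namespace MullerIsraelStewart

variable {K : Type*} [Field K]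

/-- `p` stands for `ϱ + q`. -/
def A0 (u0 u1 p c : K) : Matrix (Fin 3) (Fin 3) K :=
  !![u0, p*u1/u0, 0; 0, p/u0, u1/u0; 0, c^2*p*u1/u0, u0]

def A1 (u0 u1 p c : K) : Matrix (Fin 3) (Fin 3) K :=
  !![u1, p, 0; 0, p*u1/u0^2, 1; 0, c^2*p, u1]

variable {u0 u1 p c : K}

theorem det_A0 (hu0 : u0 ≠ 0) :
    det (A0 u0 u1 p c) = p * (u0 - c*u1) * (u0 + c*u1) / u0 := by
  simp only [A0, det_fin_three, of_apply, cons_val', cons_val_zero, cons_val_fin_one, cons_val_one,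
    cons_val, mul_zero, zero_mul, sub_zero, add_zero]
  field_simp
  ring

theorem det_A1_sub_smul_A0 (hu0 : u0 ≠ 0) (μ : K) :
    det (A1 u0 u1 p c - μ • A0 u0 u1 p c) =
      p / u0^2 * ((u1 - μ*u0) * ((u1 + c*u0) - μ*(u0 + c*u1)) *
        ((u1 - c*u0) - μ*(u0 - c*u1))) := by
  simp only [A1, A0, smul_of, smul_cons, smul_eq_mul, mul_zero, smul_empty, of_sub_of, sub_cons,
    head_cons, tail_cons, sub_self, zero_empty, det_fin_three, of_apply, cons_val', cons_val_zero,
    cons_val_fin_one, cons_val_one, cons_val, Pi.zero_apply, zero_mul, sub_zero, add_zero]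
  field_simp
  ring

theorem det_A1_sub_smul_A0_eq_zero (hu0 : u0 ≠ 0) (hplus : u0 + c*u1 ≠ 0)
    (hminus : u0 - c*u1 ≠ 0) {μ : K}
    (hμ : μ ∈ ({u1/u0, (u1 + c*u0)/(c*u1 + u0), (-u1 + c*u0)/(c*u1 - u0)} : Set K)) :
    det (A1 u0 u1 p c - μ • A0 u0 u1 p c) = 0 := by
  rw [det_A1_sub_smul_A0 hu0, mul_eq_zero, mul_eq_zero, mul_eq_zero]
  right
  rcases hμ with rfl | rfl | rfl
  · exact .inl (.inl (by rw [div_mul_cancel₀ _ hu0, sub_self]))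
  · rw [add_comm (c*u1)]
    exact .inl (.inr (by rw [div_mul_cancel₀ _ hplus, sub_self]))
  · rw [← neg_div_neg_eq, neg_add, neg_neg, neg_sub, ← sub_eq_add_neg]
    exact .inr (by rw [div_mul_cancel₀ _ hminus, sub_self])

end MullerIsraelStewart

theorem mul_sub_mul_add_pos_of_sq_eq {u0 u1 c : ℝ} (hu : u0^2 = 1 + u1^2) (hc : c^2 < 1) :
    0 < (u0 - c*u1) * (u0 + c*u1) := by
  nlinarith [mul_nonneg (sub_nonneg.2 hc.le) (sq_nonneg u1)]

open MullerIsraelStewart in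
theorem stmt12_general (u0 u1 ϱ q c : ℝ) (hu : u0^2 = 1 + u1^2)
    (hq : 0 < ϱ + q) (hc0 : 0 < c) (hc1 : c < 1) :
    let A0 : Matrix (Fin 3) (Fin 3) ℝ :=
      !![u0, (ϱ+q)*u1/u0, 0; 0, (ϱ+q)/u0, u1/u0; 0, c^2*(ϱ+q)*u1/u0, u0]
    let A1 : Matrix (Fin 3) (Fin 3) ℝ :=
      !![u1, ϱ+q, 0; 0, (ϱ+q)*u1/u0^2, 1; 0, c^2*(ϱ+q), u1]
    ∀ μ ∈ ({u1/u0, (u1 + c*u0)/(c*u1 + u0), (-u1 + c*u0)/(c*u1 - u0)} : Set ℝ),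
      Matrix.det (A0⁻¹ * A1 - μ • (1 : Matrix (Fin 3) (Fin 3) ℝ)) = 0 := by
  intro _ _ μ hμ
  have hu0 : u0 ≠ 0 := by
    rintro rfl
    nlinarith [sq_nonneg u1]
  have hfactors := mul_sub_mul_add_pos_of_sq_eq hu (pow_lt_one₀ hc0.le hc1 two_ne_zero)
  have hminus : u0 - c*u1 ≠ 0 := left_ne_zero_of_mul hfactors.ne'
  have hplus : u0 + c*u1 ≠ 0 := right_ne_zero_of_mul hfactors.ne'
  have hdet : IsUnit (A0 u0 u1 (ϱ+q) c).det := by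
    rw [det_A0 hu0]
    exact isUnit_iff_ne_zero.2 (by positivity)
  exact (det_inv_mul_sub_smul_one_eq_zero_iff hdet μ).2
    (det_A1_sub_smul_A0_eq_zero hu0 hplus hminus hμ)

theorem stmt12 (u0 u1 ϱ q c : ℝ) (hu : u0^2 = 1 + u1^2) (hu0 : 1 ≤ u0)
    (hq : 0 < ϱ + q) (hc0 : 0 < c) (hc1 : c < 1) :
    let A0 : Matrix (Fin 3) (Fin 3) ℝ :=
      !![u0, (ϱ+q)*u1/u0, 0; 0, (ϱ+q)/u0, u1/u0; 0, c^2*(ϱ+q)*u1/u0, u0]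
    let A1 : Matrix (Fin 3) (Fin 3) ℝ :=
      !![u1, ϱ+q, 0; 0, (ϱ+q)*u1/u0^2, 1; 0, c^2*(ϱ+q), u1]
    ∀ μ ∈ ({u1/u0, (u1 + c*u0)/(c*u1 + u0), (-u1 + c*u0)/(c*u1 - u0)} : Set ℝ),
      Matrix.det (A0⁻¹ * A1 - μ • (1 : Matrix (Fin 3) (Fin 3) ℝ)) = 0 :=
  stmt12_general u0 u1 ϱ q c hu hq hc0 hc1
end

section
/- Let c = c(ϱ, q) > 0 be defined by c² = p'(ϱ) + ζ(ϱ)/(τ₀(ϱ)(ϱ+q)) for ϱ + q > 0, where p, ζ, τ₀ are differentiable functions of ϱ with τ₀ > 0. If ∂c/∂q = −c/(ϱ+q) for all (ϱ, q) with ϱ+q > 0, then (1/2)·ζ(ϱ)/(τ₀(ϱ)(ϱ+q)) + p'(ϱ) = 0 for all such (ϱ, q), and consequently p'(ϱ) = 0 and ζ(ϱ) = 0 for all ϱ. -/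
/-!
Differentiating `c² = p' + ζ / (τ₀ (ϱ + q))` in `q` and inserting `∂_q c = -c / (ϱ + q)` gives
`-2 c² / (ϱ + q) = -ζ / (τ₀ (ϱ + q)²)`, i.e. `ζ / (2 τ₀ (ϱ + q)) + p' = 0`. Since this holds for every
`ϱ + q > 0`, both the constant term `p'(ϱ)` and the coefficient `ζ(ϱ) / τ₀(ϱ)` of `1 / (ϱ + q)` vanish.
-/

open Filter Topology

lemma half_div_add_eq_zero_of_sq_eq_of_hasDerivAt {g : ℝ → ℝ} {A B r q : ℝ} (hq : r + q ≠ 0)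
    (hsq : (fun s ↦ g s ^ 2) =ᶠ[𝓝 q] fun s ↦ A + B / (r + s))
    (hg : HasDerivAt g (-g q / (r + q)) q) :
    1 / 2 * (B / (r + q)) + A = 0 := by
  have hrhs : HasDerivAt (fun s ↦ A + B / (r + s)) (-B / (r + q) ^ 2) q := by
    have h : HasDerivAt (fun s ↦ A + B / (r + s)) ((0 * (r + q) - B * 1) / (r + q) ^ 2) q :=
      ((hasDerivAt_const q B).fun_div ((hasDerivAt_id' q).const_add r) hq).const_add A
    rwa [zero_mul, zero_sub, mul_one] at h
  have hlhs : HasDerivAt (fun s ↦ g s ^ 2) (2 * g q * (-g q / (r + q))) q := by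
    simpa using hg.fun_pow 2
  have hderiv : 2 * g q * (-g q / (r + q)) = -B / (r + q) ^ 2 :=
    hlhs.unique (hrhs.congr_of_eventuallyEq hsq)
  have hval : g q ^ 2 = A + B / (r + q) := hsq.eq_of_nhds
  field_simp at hderiv hval ⊢
  linear_combination -hderiv - 2 * hval

lemma eq_zero_and_eq_zero_of_forall_pos_half_div_add_eq_zero {A B : ℝ}
    (h : ∀ x : ℝ, 0 < x → 1 / 2 * (B / x) + A = 0) : A = 0 ∧ B = 0 := by
  have h₁ := h 1 one_pos
  have h₂ := h 2 two_pos
  constructor <;> linarith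

theorem stmt15_general (p ζ τ₀ : ℝ → ℝ) (c : ℝ → ℝ → ℝ)
    (hτpos : ∀ ϱ, 0 < τ₀ ϱ)
    (hc2 : ∀ ϱ q, 0 < ϱ + q → (c ϱ q)^2 = deriv p ϱ + ζ ϱ / (τ₀ ϱ * (ϱ + q)))
    (hdq : ∀ ϱ q, 0 < ϱ + q → HasDerivAt (fun s => c ϱ s) (-(c ϱ q)/(ϱ+q)) q) :
    (∀ ϱ q, 0 < ϱ + q → (1/2) * (ζ ϱ / (τ₀ ϱ * (ϱ + q))) + deriv p ϱ = 0) ∧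
    (∀ ϱ, deriv p ϱ = 0) ∧ (∀ ϱ, ζ ϱ = 0) := by
  have hrelation : ∀ ϱ q, 0 < ϱ + q → 1 / 2 * (ζ ϱ / τ₀ ϱ / (ϱ + q)) + deriv p ϱ = 0 := by
    intro ϱ q hq
    have hsq : (fun s ↦ c ϱ s ^ 2) =ᶠ[𝓝 q] fun s ↦ deriv p ϱ + ζ ϱ / τ₀ ϱ / (ϱ + s) := by
      filter_upwards [Ioi_mem_nhds (show -ϱ < q by linarith)] with s hs
      rw [hc2 ϱ s (by linarith [Set.mem_Ioi.mp hs]), div_div]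
    exact half_div_add_eq_zero_of_sq_eq_of_hasDerivAt hq.ne' hsq (hdq ϱ q hq)
  have hconst (ϱ : ℝ) : deriv p ϱ = 0 ∧ ζ ϱ / τ₀ ϱ = 0 :=
    eq_zero_and_eq_zero_of_forall_pos_half_div_add_eq_zero fun x hx ↦ by
      simpa using hrelation ϱ (x - ϱ) (by linarith)
  refine ⟨fun ϱ q hq ↦ by simpa only [div_div] using hrelation ϱ q hq, fun ϱ ↦ (hconst ϱ).1, fun ϱ ↦ ?_⟩
  simpa [(hτpos ϱ).ne'] using (hconst ϱ).2

theorem stmt15 (p ζ τ₀ : ℝ → ℝ) (c : ℝ → ℝ → ℝ)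
    (hp : Differentiable ℝ p) (hζ : Differentiable ℝ ζ) (hτ : Differentiable ℝ τ₀)
    (hτpos : ∀ ϱ, 0 < τ₀ ϱ)
    (hcpos : ∀ ϱ q, 0 < ϱ + q → 0 < c ϱ q)
    (hc2 : ∀ ϱ q, 0 < ϱ + q → (c ϱ q)^2 = deriv p ϱ + ζ ϱ / (τ₀ ϱ * (ϱ + q)))
    (hdq : ∀ ϱ q, 0 < ϱ + q → HasDerivAt (fun s => c ϱ s) (-(c ϱ q)/(ϱ+q)) q) :
    (∀ ϱ q, 0 < ϱ + q → (1/2) * (ζ ϱ / (τ₀ ϱ * (ϱ + q))) + deriv p ϱ = 0) ∧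
    (∀ ϱ, deriv p ϱ = 0) ∧ (∀ ϱ, ζ ϱ = 0) :=
  stmt15_general p ζ τ₀ c hτpos hc2 hdq
end

section
/- Let Y : (0,∞) → ℝ³, n ↦ (Y_ϱ(n), n, Y_Π(n)) be an integral curve of the vector field V(ϱ, n, Π) = ((ϱ + p(ϱ,n) + Π)/n, 1, ζ(ϱ,n)/(n·τ₀(ϱ,n))), where p is globally Lipschitz on ℝ × ℝ⁺, ζ/τ₀ is bounded with bounded derivatives, and τ₀ ≥ c > 0. Then the maximal integral curve through any point (ϱ₀, n₀, Π₀) with n₀ > 0 is defined for all n ∈ (0, ∞). -/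
/-!
Substituting `n = exp t` turns the system into `x' = F (exp t) x` with
`F n (ϱ, Π) = (ϱ + p ϱ n + Π, Z ϱ n)`, which is Lipschitz in `x` uniformly in `t`.
For such a field Picard–Lindelöf gives solutions on intervals of a fixed length through every
point, so by uniqueness they can be glued, step by step, into a solution on all of `ℝ`.
-/

open Set Filter Real
open scoped NNReal Topology

section IntegralCurve

variable {E : Type*} [NormedAddCommGroup E] [NormedSpace ℝ E]
  {v : ℝ → E → E} {K : ℝ≥0} {γ γ' : ℝ → E} {a b a' b' t₀ : ℝ}

theorem IsIntegralCurveOn.eqOn_Ioo (hv : ∀ t, LipschitzWith K (v t))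
    (hγ : IsIntegralCurveOn γ v (Ioo a b)) (hγ' : IsIntegralCurveOn γ' v (Ioo a b))
    (ht₀ : t₀ ∈ Ioo a b) (h : γ t₀ = γ' t₀) : EqOn γ γ' (Ioo a b) :=
  ODE_solution_unique_of_mem_Ioo (s := fun _ ↦ univ) (fun t _ ↦ (hv t).lipschitzOnWith) ht₀
    (fun t ht ↦ ⟨(hγ t ht).hasDerivAt (Ioo_mem_nhds ht.1 ht.2), mem_univ _⟩)
    (fun t ht ↦ ⟨(hγ' t ht).hasDerivAt (Ioo_mem_nhds ht.1 ht.2), mem_univ _⟩) h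

theorem IsIntegralCurveOn.exists_glue_Ioo (hv : ∀ t, LipschitzWith K (v t))
    (hγ : IsIntegralCurveOn γ v (Ioo a b)) (hγ' : IsIntegralCurveOn γ' v (Ioo a' b'))
    (ht₀ : t₀ ∈ Ioo a b ∩ Ioo a' b') (h : γ t₀ = γ' t₀) :
    ∃ Γ : ℝ → E, EqOn Γ γ (Ioo a b) ∧ IsIntegralCurveOn Γ v (Ioo (min a a') (max b b')) := by
  set Γ := (Ioo a b).piecewise γ γ'
  have hΓγ : EqOn Γ γ (Ioo a b) := piecewise_eqOn _ _ _
  have hΓγ' : EqOn Γ γ' (Ioo a' b') := by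
    have hγγ' : EqOn γ γ' (Ioo (max a a') (min b b')) :=
      (hγ.mono (Ioo_subset_Ioo (le_max_left ..) (min_le_left ..))).eqOn_Ioo hv
        (hγ'.mono (Ioo_subset_Ioo (le_max_right ..) (min_le_right ..)))
        ⟨max_lt ht₀.1.1 ht₀.2.1, lt_min ht₀.1.2 ht₀.2.2⟩ h
    intro t ht
    by_cases hab : t ∈ Ioo a b
    · exact (hΓγ hab).trans (hγγ' ⟨max_lt hab.1 ht.1, lt_min hab.2 ht.2⟩)
    · exact piecewise_eq_of_notMem _ _ _ hab
  have hderiv {c d : ℝ} {g : ℝ → E} (hg : IsIntegralCurveOn g v (Ioo c d))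
      (hΓg : EqOn Γ g (Ioo c d)) (t : ℝ) (ht : t ∈ Ioo c d) : HasDerivAt Γ (v t (Γ t)) t := by
    have hnhds : Γ =ᶠ[𝓝 t] g := eventually_of_mem (Ioo_mem_nhds ht.1 ht.2) hΓg
    rw [hnhds.eq_of_nhds]
    exact ((hg t ht).hasDerivAt (Ioo_mem_nhds ht.1 ht.2)).congr_of_eventuallyEq hnhds
  refine ⟨Γ, hΓγ, fun t ht ↦ HasDerivAt.hasDerivWithinAt ?_⟩
  rw [← Ioo_union_Ioo' (ht₀.2.1.trans ht₀.1.2) (ht₀.1.1.trans ht₀.2.2)] at ht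
  rcases ht with ht | ht
  exacts [hderiv hγ hΓγ t ht, hderiv hγ' hΓγ' t ht]

theorem IsIntegralCurve.hasDerivAt_comp_log {F : ℝ → E → E} {W : ℝ → E}
    (hW : IsIntegralCurve W (fun t ↦ F (exp t))) {n : ℝ} (hn : 0 < n) :
    HasDerivAt (W ∘ log) (n⁻¹ • F n (W (log n))) n := by
  simpa only [exp_log hn] using (hW (log n)).scomp n (hasDerivAt_log hn.ne')

variable [CompleteSpace E]

theorem exists_isIntegralCurveOn_Icc_of_lipschitzWith (hv : ∀ t, LipschitzWith K (v t))
    (hcont : ∀ x, Continuous (v · x)) {δ : ℝ≥0} (hKδ : K * δ ≤ 1 / 2) (t₁ : ℝ) (x₁ : E) :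
    ∃ γ : ℝ → E, γ t₁ = x₁ ∧ IsIntegralCurveOn γ v (Icc (t₁ - δ) (t₁ + δ)) := by
  obtain ⟨M, hM⟩ := isCompact_Icc.exists_bound_of_continuousOn (hcont x₁).continuousOn
  -- the Picard iterates stay in the ball of radius `R`, on which `‖v‖ ≤ M + K * R`
  set M' := M.toNNReal
  set R : ℝ≥0 := 2 * M' * δ
  have hvR : ∀ t ∈ Icc (t₁ - δ) (t₁ + δ), ∀ x ∈ Metric.closedBall x₁ R,
      ‖v t x‖ ≤ M' + K * R := by
    intro t ht x hx
    calc ‖v t x‖ ≤ ‖v t x₁‖ + ‖v t x - v t x₁‖ := norm_le_norm_add_norm_sub' _ _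
      _ ≤ M' + K * ‖x - x₁‖ := by
        gcongr
        · exact (hM t ht).trans (le_coe_toNNReal M)
        · simpa only [← dist_eq_norm] using (hv t).dist_le_mul x x₁
      _ ≤ M' + K * R := by gcongr; exact mem_closedBall_iff_norm.mp hx
  have hpl : IsPicardLindelof v (tmin := t₁ - δ) (tmax := t₁ + δ)
      ⟨t₁, by constructor <;> linarith [δ.coe_nonneg]⟩ x₁ R 0 (M' + K * R) K :=
    { lipschitzOnWith := fun t _ ↦ (hv t).lipschitzOnWith
      continuousOn := fun x _ ↦ (hcont x).continuousOn
      norm_le := hvR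
      mul_max_le := by
        have hKδ' : (K : ℝ) * δ ≤ 1 / 2 := by exact_mod_cast hKδ
        simp only [add_sub_cancel_left, sub_sub_cancel, max_self, R]
        push_cast
        nlinarith [mul_nonneg M'.coe_nonneg δ.coe_nonneg] }
  exact hpl.exists_eq_forall_mem_Icc_hasDerivWithinAt₀

theorem exists_isIntegralCurveOn_Ioo_of_lipschitzWith (hv : ∀ t, LipschitzWith K (v t))
    (hcont : ∀ x, Continuous (v · x)) (t₀ : ℝ) (x₀ : E) (r : ℝ) :
    ∃ γ : ℝ → E, γ t₀ = x₀ ∧ IsIntegralCurveOn γ v (Ioo (t₀ - r) (t₀ + r)) := by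
  -- local solutions exist on intervals of radius `2 * δ`, so each gluing step gains `δ`
  set δ : ℝ≥0 := (4 * (K + 1))⁻¹
  have hδ : 0 < (δ : ℝ) := by positivity
  have hKδ : K * (2 * δ) ≤ 1 / 2 := by
    rw [← mul_assoc, show K * 2 * δ = 2 * K / (4 * (K + 1)) by ring,
      div_le_iff₀ (by positivity)]
    linarith [K.coe_nonneg]
  have hloc (t₁ : ℝ) (x₁ : E) : ∃ γ : ℝ → E, γ t₁ = x₁ ∧
      IsIntegralCurveOn γ v (Ioo (t₁ - 2 * δ) (t₁ + 2 * δ)) := by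
    obtain ⟨γ, hγ₁, hγ⟩ := exists_isIntegralCurveOn_Icc_of_lipschitzWith hv hcont hKδ t₁ x₁
    exact ⟨γ, hγ₁, hγ.mono (by push_cast; exact Ioo_subset_Icc_self)⟩
  have hgrow (n : ℕ) : ∃ γ : ℝ → E, γ t₀ = x₀ ∧
      IsIntegralCurveOn γ v (Ioo (t₀ - (n + 1) * δ) (t₀ + (n + 1) * δ)) := by
    induction n with
    | zero =>
      obtain ⟨γ, hγ₀, hγ⟩ := hloc t₀ x₀
      push_cast
      exact ⟨γ, hγ₀, hγ.mono (Ioo_subset_Ioo (by linarith) (by linarith))⟩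
    | succ n ih =>
      obtain ⟨γ, hγ₀, hγ⟩ := ih
      have hnδ : (0 : ℝ) ≤ n * δ := by positivity
      obtain ⟨γR, hγR, hR⟩ := hloc (t₀ + n * δ) (γ (t₀ + n * δ))
      obtain ⟨γL, hγL, hL⟩ := hloc (t₀ - n * δ) (γ (t₀ - n * δ))
      obtain ⟨Γ₁, hΓ₁, hΓ₁R⟩ := hγ.exists_glue_Ioo hv hR
        ⟨⟨by linarith, by linarith⟩, ⟨by linarith, by linarith⟩⟩ hγR.symm
      have hΓ₁' := hΓ₁R.mono (Ioo_subset_Ioo (min_le_left ..)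
        (le_max_of_le_right (a := t₀ + (n + 1 + 1) * δ) (by linarith)))
      obtain ⟨Γ, hΓ, hΓL⟩ := hΓ₁'.exists_glue_Ioo hv hL
        ⟨⟨by linarith, by linarith⟩, ⟨by linarith, by linarith⟩⟩
        ((hΓ₁ ⟨by linarith, by linarith⟩).trans hγL.symm)
      refine ⟨Γ, ?_, hΓL.mono ?_⟩
      · rw [hΓ ⟨by linarith, by linarith⟩, hΓ₁ ⟨by linarith, by linarith⟩, hγ₀]
      · push_cast
        exact Ioo_subset_Ioo (min_le_of_right_le (by linarith)) (le_max_left ..)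
  obtain ⟨n, hn⟩ := exists_nat_ge (r / δ)
  obtain ⟨γ, hγ₀, hγ⟩ := hgrow n
  have hr : r ≤ (n + 1) * δ := by
    rw [div_le_iff₀ hδ] at hn; nlinarith
  exact ⟨γ, hγ₀, hγ.mono (Ioo_subset_Ioo (by linarith) (by linarith))⟩

theorem exists_isIntegralCurve_of_lipschitzWith (hv : ∀ t, LipschitzWith K (v t))
    (hcont : ∀ x, Continuous (v · x)) (t₀ : ℝ) (x₀ : E) :
    ∃ γ : ℝ → E, γ t₀ = x₀ ∧ IsIntegralCurve γ v := by
  choose γ hγ₀ hγ using exists_isIntegralCurveOn_Ioo_of_lipschitzWith hv hcont t₀ x₀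
  have hagree {r r' : ℝ} (hr : 0 < r) (hr' : 0 < r') :
      EqOn (γ r) (γ r') (Ioo (t₀ - min r r') (t₀ + min r r')) := by
    have := min_le_left r r'
    have := min_le_right r r'
    exact ((hγ r).mono (Ioo_subset_Ioo (by linarith) (by linarith))).eqOn_Ioo hv
      ((hγ r').mono (Ioo_subset_Ioo (by linarith) (by linarith)))
      ⟨by simp [hr, hr'], by simp [hr, hr']⟩ ((hγ₀ r).trans (hγ₀ r').symm)
  -- by uniqueness the local curves `γ r` are compatible, so evaluating each `t` on one whose
  -- interval contains it gives a global curve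
  refine ⟨fun t ↦ γ (|t - t₀| + 1) t, by simpa using hγ₀ 1, fun t ↦ ?_⟩
  set r := |t - t₀| + 1
  have hr : 0 < r := by positivity
  have ht : t ∈ Ioo (t₀ - r) (t₀ + r) := by
    constructor <;> linarith [neg_abs_le (t - t₀), le_abs_self (t - t₀)]
  have hnhds : (fun s ↦ γ (|s - t₀| + 1) s) =ᶠ[𝓝 t] γ r := by
    filter_upwards [Ioo_mem_nhds ht.1 ht.2] with s hs
    refine hagree (by positivity) hr ⟨?_, ?_⟩ <;>
      cases min_choice (|s - t₀| + 1) r <;> simp_all <;>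
      linarith [neg_abs_le (s - t₀), le_abs_self (s - t₀)]
  exact ((hγ r t ht).hasDerivAt (Ioo_mem_nhds ht.1 ht.2)).congr_of_eventuallyEq hnhds

end IntegralCurve

theorem stmt16_general (p Z : ℝ → ℝ → ℝ) (K : ℝ)
    (hp : LipschitzWith (Real.toNNReal K) (fun x : ℝ × ℝ => p x.1 x.2))
    (hZlip : LipschitzWith (Real.toNNReal K) (fun x : ℝ × ℝ => Z x.1 x.2)) :
    ∀ (ϱ₀ P₀ n₀ : ℝ), 0 < n₀ →
      ∃ Y : ℝ → ℝ × ℝ, Y n₀ = (ϱ₀, P₀) ∧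
        ∀ n, 0 < n → HasDerivAt Y
          ((((Y n).1 + p (Y n).1 n + (Y n).2) / n, Z (Y n).1 n / n)) n := by
  intro ϱ₀ P₀ n₀ _
  set F : ℝ → ℝ × ℝ → ℝ × ℝ := fun n x ↦ (x.1 + p x.1 n + x.2, Z x.1 n)
  have hslice (n : ℝ) : LipschitzWith 1 fun x : ℝ × ℝ ↦ (x.1, n) := by
    simpa [Function.comp_def] using (LipschitzWith.prodMk_right n).comp LipschitzWith.prod_fst
  have hF (n : ℝ) : LipschitzWith _ (F n) :=
    ((LipschitzWith.prod_fst.add (hp.comp (hslice n))).add LipschitzWith.prod_snd).prodMk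
      (hZlip.comp (hslice n))
  have hFcont (x : ℝ × ℝ) : Continuous (F · x) := by
    have hin : Continuous fun n : ℝ ↦ (x.1, n) := continuous_const.prodMk continuous_id
    exact ((continuous_const.add (hp.continuous.comp hin)).add continuous_const).prodMk
      (hZlip.continuous.comp hin)
  obtain ⟨W, hW₀, hW⟩ := exists_isIntegralCurve_of_lipschitzWith (v := fun t ↦ F (exp t))
    (fun t ↦ hF _) (fun x ↦ (hFcont x).comp continuous_exp) (log n₀) (ϱ₀, P₀)
  refine ⟨W ∘ log, hW₀, fun n hn ↦ ?_⟩
  refine (hW.hasDerivAt_comp_log hn).congr_deriv ?_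
  simp [F, Prod.smul_def, div_eq_inv_mul]

theorem stmt16 (p Z : ℝ → ℝ → ℝ) (K C : ℝ)
    (hp : LipschitzWith (Real.toNNReal K) (fun x : ℝ × ℝ => p x.1 x.2))
    (hZb : ∀ ϱ n, |Z ϱ n| ≤ C)
    (hZlip : LipschitzWith (Real.toNNReal K) (fun x : ℝ × ℝ => Z x.1 x.2)) :
    ∀ (ϱ₀ P₀ n₀ : ℝ), 0 < n₀ →
      ∃ Y : ℝ → ℝ × ℝ, Y n₀ = (ϱ₀, P₀) ∧
        ∀ n, 0 < n → HasDerivAt Y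
          ((((Y n).1 + p (Y n).1 n + (Y n).2) / n, Z (Y n).1 n / n)) n :=
  stmt16_general p Z K hp hZlip
end

section
/- Suppose φ : [n₀, N) → ℝ is continuous and satisfies φ(n) = φ₀ + ∫_{n₀}^{n} (E(s)^{-1}/s) ∫_{n₀}^{s} E(s')·(φ(s') − 1)/s' · w(s') ds' ds, where φ₀ < 0, w ≥ 0 is continuous, and E > 0 is continuous. Then φ(n) < 0 for all n ∈ [n₀, N). -/
/-!
If `φ` were nonnegative somewhere, it would have a first zero `n₁`. On `[n₀, n₁]` we have
`φ - 1 ≤ 0`, so both inner and outer integrands of the identity are nonpositive there, and the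
identity gives `0 = φ n₁ ≤ φ₀ < 0`.
-/

open Set

theorem ContinuousOn.exists_eq_zero_forall_nonpos {a b : ℝ} {f : ℝ → ℝ} (hab : a ≤ b)
    (hf : ContinuousOn f (Icc a b)) (ha : f a < 0) (hb : 0 ≤ f b) :
    ∃ c ∈ Icc a b, f c = 0 ∧ ∀ x ∈ Icc a c, f x ≤ 0 := by
  set S := Icc a b ∩ f ⁻¹' Ici 0
  have hS : IsClosed S := hf.preimage_isClosed_of_isClosed isClosed_Icc isClosed_Ici
  have hSne : S.Nonempty := ⟨b, right_mem_Icc.2 hab, hb⟩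
  have hSbdd : BddBelow S := ⟨a, fun x hx => hx.1.1⟩
  set c := sInf S
  obtain ⟨hcab, hc0⟩ : c ∈ S := hS.csInf_mem hSne hSbdd
  have hneg : ∀ x ∈ Ico a c, f x < 0 := fun x hx => by
    by_contra! h
    exact (csInf_le hSbdd ⟨⟨hx.1, hx.2.le.trans hcab.2⟩, h⟩).not_gt hx.2
  -- By the intermediate value theorem `f` vanishes on `[a, c]`, and only `c` is left.
  obtain ⟨z, hz, hz0⟩ : (0 : ℝ) ∈ f '' Icc a c :=
    intermediate_value_Icc hcab.1 (hf.mono (Icc_subset_Icc_right hcab.2)) ⟨ha.le, hc0⟩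
  have hzc : z = c := hz.2.eq_or_lt.resolve_right fun h => (hneg z ⟨hz.1, h⟩).ne hz0
  refine ⟨c, hcab, hzc ▸ hz0, fun x hx => ?_⟩
  rcases hx.2.eq_or_lt with rfl | h
  · exact (hzc ▸ hz0).le
  · exact (hneg x ⟨hx.1, h⟩).le

theorem intervalIntegral.integral_nonpos_of_forall {a b : ℝ} {f : ℝ → ℝ} (hab : a ≤ b)
    (hf : ∀ u ∈ Icc a b, f u ≤ 0) : ∫ u in a..b, f u ≤ 0 := by
  have h : 0 ≤ ∫ u in a..b, -f u := integral_nonneg hab fun u hu => neg_nonneg.2 (hf u hu)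
  rwa [integral_neg, neg_nonneg] at h

theorem intervalIntegral.integral_mul_integral_nonpos {a b : ℝ} {g h : ℝ → ℝ} (hab : a ≤ b)
    (hg : ∀ s ∈ Icc a b, 0 ≤ g s) (hh : ∀ t ∈ Icc a b, h t ≤ 0) :
    ∫ s in a..b, g s * ∫ t in a..s, h t ≤ 0 :=
  integral_nonpos_of_forall hab fun s hs =>
    mul_nonpos_of_nonneg_of_nonpos (hg s hs)
      (integral_nonpos_of_forall hs.1 fun t ht => hh t ⟨ht.1, ht.2.trans hs.2⟩)

theorem stmt17_general (n₀ N φ₀ : ℝ) (hn₀ : 0 < n₀)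
    (φ w E : ℝ → ℝ)
    (hφ : ContinuousOn φ (Set.Ico n₀ N))
    (hw0 : ∀ s, 0 ≤ w s)
    (hE0 : ∀ s, 0 < E s)
    (hφ₀ : φ₀ < 0)
    (hid : ∀ n ∈ Set.Ico n₀ N,
      φ n = φ₀ + ∫ s in n₀..n, (E s)⁻¹ / s * ∫ t in n₀..s, E t * (φ t - 1) / t * w t) :
    ∀ n ∈ Set.Ico n₀ N, φ n < 0 := by
  intro n hn
  by_contra! hφn
  have hφn₀ : φ n₀ = φ₀ := by
    simpa using hid n₀ ⟨le_rfl, hn.1.trans_lt hn.2⟩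
  obtain ⟨n₁, hn₁, hφn₁, hφle⟩ := (hφ.mono (Icc_subset_Ico_right hn.2)).exists_eq_zero_forall_nonpos
    hn.1 (hφn₀ ▸ hφ₀) hφn
  have hint := intervalIntegral.integral_mul_integral_nonpos (g := fun s => (E s)⁻¹ / s)
    (h := fun t => E t * (φ t - 1) / t * w t) hn₁.1
    (fun s hs => div_nonneg (inv_nonneg.2 (hE0 s).le) (hn₀.trans_le hs.1).le)
    (fun t ht => mul_nonpos_of_nonpos_of_nonneg
      (div_nonpos_of_nonpos_of_nonneg
        (mul_nonpos_of_nonneg_of_nonpos (hE0 t).le (by linarith [hφle t ht]))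
        (hn₀.trans_le ht.1).le)
      (hw0 t))
  linarith [hid n₁ ⟨hn₁.1, hn₁.2.trans_lt hn.2⟩]

theorem stmt17 (n₀ N φ₀ : ℝ) (hn₀ : 0 < n₀) (hN : n₀ < N)
    (φ w E : ℝ → ℝ)
    (hφ : ContinuousOn φ (Set.Ico n₀ N))
    (hw : Continuous w) (hw0 : ∀ s, 0 ≤ w s)
    (hE : Continuous E) (hE0 : ∀ s, 0 < E s)
    (hφ₀ : φ₀ < 0)
    (hid : ∀ n ∈ Set.Ico n₀ N,
      φ n = φ₀ + ∫ s in n₀..n, (E s)⁻¹ / s * ∫ t in n₀..s, E t * (φ t - 1) / t * w t) :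
    ∀ n ∈ Set.Ico n₀ N, φ n < 0 :=
  stmt17_general n₀ N φ₀ hn₀ φ w E hφ hw0 hE0 hφ₀ hid
end
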